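/- arXiv:1405.3052 — 8 statements merged into one kernel-verified Lean document; each statement's English description precedes it below -/
import Mathlib

section
/- Let b₀ ∈ ℝ. The following are equivalent: (i) for all real x₁, ξ₁, ξₙ, every complex root τ of the polynomial τ³ − (ξ₁² + x₁²ξₙ²)τ − b₀x₁³ξₙ³ is real; (ii) b₀² ≤ 4/27. -/
/-!
The discriminant of `τ³ − pτ − q` is `4p³ − 27q²`. If `a ± bi` (`b ≠ 0`) are roots, the third root is
`−2a` and the discriminant equals `−4b²(9a² + b²)² < 0`; conversely, if `r` is a real root, the
discriminant equals `(4p − 3r²)(3r² − p)²`, so a negative discriminant forces the quadratic factor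
`τ² + rτ + r² − p` to have non-real roots. For the symbol, `p = ξ₁² + x₁²ξₙ² ≥ (x₁ξₙ)²` and
`q = b₀(x₁ξₙ)³`, so `27q² ≤ 4p³` for all arguments exactly when `27b₀² ≤ 4` (take `x₁ = ξₙ = 1`,
`ξ₁ = 0`).
-/

open Complex

namespace DepressedCubic

variable {p q : ℝ}

lemma coeffs_of_nonreal_root {τ : ℂ} (hτ : τ ^ 3 - (p : ℂ) * τ - (q : ℂ) = 0) (him : τ.im ≠ 0) :
    p = 3 * τ.re ^ 2 - τ.im ^ 2 ∧ q = -2 * τ.re * (τ.re ^ 2 + τ.im ^ 2) := by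
  have hre := congrArg Complex.re hτ
  have him' := congrArg Complex.im hτ
  simp only [pow_succ, pow_zero, one_mul, sub_re, sub_im, mul_re, mul_im, ofReal_re, ofReal_im,
    zero_re, zero_im] at hre him'
  have hp : p = 3 * τ.re ^ 2 - τ.im ^ 2 := by
    apply mul_right_cancel₀ him
    linear_combination -him'
  exact ⟨hp, by linear_combination -hre - τ.re * hp⟩

lemma im_eq_zero_of_root (hdisc : 27 * q ^ 2 ≤ 4 * p ^ 3) {τ : ℂ}
    (hτ : τ ^ 3 - (p : ℂ) * τ - (q : ℂ) = 0) : τ.im = 0 := by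
  by_contra him
  obtain ⟨hp, hq⟩ := coeffs_of_nonreal_root hτ him
  have hdisc_eq : 4 * p ^ 3 - 27 * q ^ 2 = -4 * τ.im ^ 2 * (9 * τ.re ^ 2 + τ.im ^ 2) ^ 2 := by
    rw [hp, hq]; ring
  have : 0 < τ.im ^ 2 * (9 * τ.re ^ 2 + τ.im ^ 2) ^ 2 := by positivity
  linarith

lemma exists_real_root (p q : ℝ) : ∃ r : ℝ, r ^ 3 - p * r - q = 0 := by
  set M := |p| + |q| + 1
  have hM : 1 ≤ M := le_add_of_nonneg_left (by positivity)
  have hf : ContinuousOn (fun r : ℝ => r ^ 3 - p * r - q) (Set.Icc (-M) M) := by fun_prop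
  have h0 : (0 : ℝ) ∈ Set.Icc ((-M) ^ 3 - p * (-M) - q) (M ^ 3 - p * M - q) := by
    have hMsq : M ≤ M ^ 2 := by nlinarith
    constructor <;>
      nlinarith [le_abs_self p, neg_abs_le p, le_abs_self q, neg_abs_le q, abs_nonneg q]
  obtain ⟨r, -, hr⟩ := intermediate_value_Icc (by linarith) hf h0
  exact ⟨r, hr⟩

lemma exists_nonreal_root (hdisc : 4 * p ^ 3 < 27 * q ^ 2) :
    ∃ τ : ℂ, τ ^ 3 - (p : ℂ) * τ - (q : ℂ) = 0 ∧ τ.im ≠ 0 := by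
  obtain ⟨r, hr⟩ := exists_real_root p q
  have hq : q = r ^ 3 - p * r := by linarith
  have hdisc_eq : 4 * p ^ 3 - 27 * q ^ 2 = (4 * p - 3 * r ^ 2) * (3 * r ^ 2 - p) ^ 2 := by
    rw [hq]; ring
  have hr2 : 4 * p < 3 * r ^ 2 := by
    by_contra! h
    nlinarith [mul_nonneg (sub_nonneg.mpr h) (sq_nonneg (3 * r ^ 2 - p))]
  set s := Real.sqrt (3 * r ^ 2 - 4 * p)
  have hs2 : s ^ 2 = 3 * r ^ 2 - 4 * p := Real.sq_sqrt (by linarith)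
  have hs : 0 < s := Real.sqrt_pos.mpr (by linarith)
  refine ⟨⟨-r / 2, s / 2⟩, ?_, by simpa using hs.ne'⟩
  apply Complex.ext <;>
    simp only [pow_succ, pow_zero, one_mul, sub_re, sub_im, mul_re, mul_im, ofReal_re, ofReal_im,
      zero_re, zero_im]
  · linear_combination (3 * r / 8) * hs2 + hr
  · linear_combination (-s / 8) * hs2

end DepressedCubic

/-- Hyperbolicity of the principal symbol: all complex roots of the cubic
`τ³ − (ξ₁² + x₁²ξₙ²)τ − b₀x₁³ξₙ³` are real for all real `(x₁, ξ₁, ξₙ)` if and only if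
`b₀² ≤ 4/27`. -/
theorem hyperbolic_iff_coeff_bound (b₀ : ℝ) :
    (∀ x₁ ξ₁ ξₙ : ℝ, ∀ τ : ℂ,
        τ ^ 3 - (↑(ξ₁ ^ 2 + x₁ ^ 2 * ξₙ ^ 2) : ℂ) * τ - (↑(b₀ * x₁ ^ 3 * ξₙ ^ 3) : ℂ) = 0 →
          τ.im = 0)
      ↔ b₀ ^ 2 ≤ 4 / 27 := by
  constructor
  · intro hyp
    by_contra! hb
    obtain ⟨τ, hτ, him⟩ := DepressedCubic.exists_nonreal_root (p := 1) (q := b₀) (by linarith)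
    exact him (hyp 1 0 1 τ (by simpa using hτ))
  · intro hb x₁ ξ₁ ξₙ τ hτ
    refine DepressedCubic.im_eq_zero_of_root ?_ hτ
    have hp : (x₁ * ξₙ) ^ 2 ≤ ξ₁ ^ 2 + x₁ ^ 2 * ξₙ ^ 2 := by nlinarith [sq_nonneg ξ₁]
    calc 27 * (b₀ * x₁ ^ 3 * ξₙ ^ 3) ^ 2 = 27 * b₀ ^ 2 * ((x₁ * ξₙ) ^ 2) ^ 3 := by ring
      _ ≤ 4 * ((x₁ * ξₙ) ^ 2) ^ 3 := by gcongr; linarith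
      _ ≤ 4 * (ξ₁ ^ 2 + x₁ ^ 2 * ξₙ ^ 2) ^ 3 := by gcongr
end

section
/- Let b₀ ∈ ℝ with |b₀| < 2/(3√3), and let x₁, ξ₁, ξₙ be real numbers with ξ₁² + x₁²ξₙ² > 0. Then the discriminant 4(ξ₁² + x₁²ξₙ²)³ − 27 b₀² x₁⁶ ξₙ⁶ is strictly positive, and the cubic τ³ − (ξ₁² + x₁²ξₙ²)τ − b₀x₁³ξₙ³ has three distinct real roots (i.e., P is strictly hyperbolic outside the triple manifold Σ₃ = {x₁ = ξ₀ = ξ₁ = 0}). -/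
/-!
Since `x₁²ξₙ² ≤ a := ξ₁² + x₁²ξₙ²` and `|b₀| < 2/(3√3)` means `27 b₀² < 4`, the constant term
`q = b₀x₁³ξₙ³` satisfies `27q² < 4a³`. Writing `a = 3s²` with `s > 0`, this is `|q| < 2s³`.
The cubic `τ³ − 3s²τ` equals `2s³` at `−s` and `2s` and `−2s³` at `−2s` and `s`, so subtracting
`q` leaves a sign change on each of `(−2s, −s)`, `(−s, s)` and `(s, 2s)`; three distinct roots
of a monic cubic are all of its roots.
-/

open Set

lemma depressed_cubic_eq_prod_sub {K : Type*} [Field K] {a q t₁ t₂ t₃ : K}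
    (h₁₂ : t₁ ≠ t₂) (h₁₃ : t₁ ≠ t₃) (h₂₃ : t₂ ≠ t₃)
    (e₁ : t₁ ^ 3 - a * t₁ - q = 0) (e₂ : t₂ ^ 3 - a * t₂ - q = 0)
    (e₃ : t₃ ^ 3 - a * t₃ - q = 0) (t : K) :
    t ^ 3 - a * t - q = (t - t₁) * (t - t₂) * (t - t₃) := by
  have p₁₂ : t₁ ^ 2 + t₁ * t₂ + t₂ ^ 2 - a = 0 :=
    (mul_eq_zero.mp (by linear_combination e₁ - e₂ :
      (t₁ - t₂) * (t₁ ^ 2 + t₁ * t₂ + t₂ ^ 2 - a) = 0)).resolve_left (sub_ne_zero.mpr h₁₂)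
  have p₁₃ : t₁ ^ 2 + t₁ * t₃ + t₃ ^ 2 - a = 0 :=
    (mul_eq_zero.mp (by linear_combination e₁ - e₃ :
      (t₁ - t₃) * (t₁ ^ 2 + t₁ * t₃ + t₃ ^ 2 - a) = 0)).resolve_left (sub_ne_zero.mpr h₁₃)
  have hsum : t₁ + t₂ + t₃ = 0 :=
    (mul_eq_zero.mp (by linear_combination p₁₂ - p₁₃ :
      (t₂ - t₃) * (t₁ + t₂ + t₃) = 0)).resolve_left (sub_ne_zero.mpr h₂₃)
  linear_combination (t ^ 2 - t * (t₁ + t₂) + t₁ * t₂) * hsum + (t - t₁) * p₁₂ + e₁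

lemma exists_three_roots_of_abs_lt {s q : ℝ} (hq : |q| < 2 * s ^ 3) :
    ∃ t₁ ∈ Ioo (-2 * s) (-s), ∃ t₂ ∈ Ioo (-s) s, ∃ t₃ ∈ Ioo s (2 * s),
      t₁ ^ 3 - 3 * s ^ 2 * t₁ - q = 0 ∧ t₂ ^ 3 - 3 * s ^ 2 * t₂ - q = 0 ∧
        t₃ ^ 3 - 3 * s ^ 2 * t₃ - q = 0 := by
  have hs : 0 < s := (Odd.pow_pos_iff (by decide)).mp (by linarith [abs_nonneg q] : 0 < s ^ 3)
  obtain ⟨hq₁, hq₂⟩ := abs_lt.mp hq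
  set f : ℝ → ℝ := fun t => t ^ 3 - 3 * s ^ 2 * t - q
  have hf : Continuous f := by fun_prop
  have f_high : f (-s) = 2 * s ^ 3 - q ∧ f (2 * s) = 2 * s ^ 3 - q := by constructor <;> ring
  have f_low : f s = -2 * s ^ 3 - q ∧ f (-2 * s) = -2 * s ^ 3 - q := by constructor <;> ring
  obtain ⟨t₁, ht₁, e₁⟩ := intermediate_value_Ioo (by linarith) hf.continuousOn
    (show (0 : ℝ) ∈ Ioo (f (-2 * s)) (f (-s)) by constructor <;> linarith)
  obtain ⟨t₂, ht₂, e₂⟩ := intermediate_value_Ioo' (by linarith) hf.continuousOn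
    (show (0 : ℝ) ∈ Ioo (f s) (f (-s)) by constructor <;> linarith)
  obtain ⟨t₃, ht₃, e₃⟩ := intermediate_value_Ioo (by linarith) hf.continuousOn
    (show (0 : ℝ) ∈ Ioo (f s) (f (2 * s)) by constructor <;> linarith)
  exact ⟨t₁, ht₁, t₂, ht₂, t₃, ht₃, e₁, e₂, e₃⟩

theorem depressed_cubic_three_roots_of_disc_pos {a q : ℝ} (ha : 0 < a)
    (hd : 27 * q ^ 2 < 4 * a ^ 3) :
    ∃ t₁ t₂ t₃ : ℝ, t₁ < t₂ ∧ t₂ < t₃ ∧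
      ∀ t : ℝ, t ^ 3 - a * t - q = 0 ↔ (t = t₁ ∨ t = t₂ ∨ t = t₃) := by
  set s := Real.sqrt (a / 3)
  have hs : 0 < s := Real.sqrt_pos.mpr (by positivity)
  have ha_eq : a = 3 * s ^ 2 := by rw [Real.sq_sqrt (by positivity)]; ring
  have hq : |q| < 2 * s ^ 3 :=
    abs_lt_of_sq_lt_sq (by rw [ha_eq] at hd; nlinarith) (by positivity)
  obtain ⟨t₁, ht₁, t₂, ht₂, t₃, ht₃, e₁, e₂, e₃⟩ := exists_three_roots_of_abs_lt hq
  rw [← ha_eq] at e₁ e₂ e₃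
  have h₁₂ : t₁ < t₂ := ht₁.2.trans ht₂.1
  have h₂₃ : t₂ < t₃ := ht₂.2.trans ht₃.1
  refine ⟨t₁, t₂, t₃, h₁₂, h₂₃, fun t => ?_⟩
  rw [depressed_cubic_eq_prod_sub h₁₂.ne (h₁₂.trans h₂₃).ne h₂₃.ne e₁ e₂ e₃ t]
  simp only [mul_eq_zero, sub_eq_zero, or_assoc]

lemma twentyseven_mul_sq_lt_four_of_abs_lt {b : ℝ} (hb : |b| < 2 / (3 * Real.sqrt 3)) : 27 * b ^ 2 < 4 := by
  have h3 : Real.sqrt 3 ^ 2 = 3 := Real.sq_sqrt (by norm_num)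
  have hb' : |b| * (3 * Real.sqrt 3) < 2 := (lt_div_iff₀ (by positivity)).mp hb
  have hsq := mul_self_lt_mul_self (by positivity) hb'
  nlinarith [sq_abs b]

/-- Strict hyperbolicity outside the triple manifold: if `|b₀| < 2/(3√3)` and
`ξ₁² + x₁²ξₙ² > 0`, then the discriminant of the cubic `τ³ − (ξ₁² + x₁²ξₙ²)τ − b₀x₁³ξₙ³`
is strictly positive and the cubic has three distinct real roots. -/
theorem strictly_hyperbolic_outside_triple_manifold (b₀ : ℝ)
    (hb₀ : |b₀| < 2 / (3 * Real.sqrt 3))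
    (x₁ ξ₁ ξₙ : ℝ) (h : 0 < ξ₁ ^ 2 + x₁ ^ 2 * ξₙ ^ 2) :
    0 < 4 * (ξ₁ ^ 2 + x₁ ^ 2 * ξₙ ^ 2) ^ 3 - 27 * b₀ ^ 2 * x₁ ^ 6 * ξₙ ^ 6 ∧
    ∃ τ₁ τ₂ τ₃ : ℝ, τ₁ < τ₂ ∧ τ₂ < τ₃ ∧
      ∀ τ : ℝ,
        τ ^ 3 - (ξ₁ ^ 2 + x₁ ^ 2 * ξₙ ^ 2) * τ - b₀ * x₁ ^ 3 * ξₙ ^ 3 = 0 ↔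
          (τ = τ₁ ∨ τ = τ₂ ∨ τ = τ₃) := by
  set a := ξ₁ ^ 2 + x₁ ^ 2 * ξₙ ^ 2
  have hm : (x₁ ^ 2 * ξₙ ^ 2) ^ 3 ≤ a ^ 3 :=
    pow_le_pow_left₀ (by positivity) (le_add_of_nonneg_left (sq_nonneg ξ₁)) 3
  have hd : 27 * (b₀ * x₁ ^ 3 * ξₙ ^ 3) ^ 2 < 4 * a ^ 3 :=
    calc 27 * (b₀ * x₁ ^ 3 * ξₙ ^ 3) ^ 2 = 27 * b₀ ^ 2 * (x₁ ^ 2 * ξₙ ^ 2) ^ 3 := by ring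
      _ ≤ 27 * b₀ ^ 2 * a ^ 3 := by gcongr
      _ < 4 * a ^ 3 := by gcongr; exact twentyseven_mul_sq_lt_four_of_abs_lt hb₀
  exact ⟨by linarith, depressed_cubic_three_roots_of_disc_pos h hd⟩
end

section
/- Let a > 0 and μ > 0, and let f : ℝ → ℂ be smooth and compactly supported. Then ∫₀^∞ e^{2μ(x₀−a)} |f′(x₀)|² dx₀ ≥ μ e^{−2μa} |f(0)|² + μ² ∫₀^∞ e^{2μ(x₀−a)} |f(x₀)|² dx₀. -/
/-!
Since the weight `W x = exp (2μ(x - a))` satisfies `W' = 2μW`, completing the square gives the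
pointwise identity `W ‖f'‖² = W ‖f' + μ f‖² - μ (W ‖f‖²)' + μ² W ‖f‖²`. Integrating over
`(0, ∞)`, the total derivative contributes `μ W(0) ‖f(0)‖²` because `f` has compact support, and
dropping the nonnegative term `W ‖f' + μ f‖²` leaves the estimate.
-/

open MeasureTheory Set Real

open scoped RealInnerProductSpace

variable {E : Type*} [NormedAddCommGroup E]

theorem HasCompactSupport.mul_norm_sq {X : Type*} [TopologicalSpace X] {u : X → E}
    (hu : HasCompactSupport u) (W : X → ℝ) : HasCompactSupport (fun x => W x * ‖u x‖ ^ 2) :=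
  (hu.comp_left (g := fun v : E => ‖v‖ ^ 2) (by simp)).mul_left

theorem HasCompactSupport.integrable_mul_norm_sq {X : Type*} [TopologicalSpace X]
    [MeasurableSpace X] [OpensMeasurableSpace X] {ν : Measure X} [IsFiniteMeasureOnCompacts ν]
    {W : X → ℝ} {u : X → E} (hu : HasCompactSupport u) (hW : Continuous W)
    (hu' : Continuous u) : Integrable (fun x => W x * ‖u x‖ ^ 2) ν :=
  (by fun_prop : Continuous fun x => W x * ‖u x‖ ^ 2).integrable_of_hasCompactSupport
    (hu.mul_norm_sq W)

variable [InnerProductSpace ℝ E]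

theorem norm_add_smul_sq (u v : E) (μ : ℝ) :
    ‖v + μ • u‖ ^ 2 = ‖v‖ ^ 2 + 2 * μ * ⟪u, v⟫ + μ ^ 2 * ‖u‖ ^ 2 := by
  rw [norm_add_sq_real, real_inner_smul_right, norm_smul, real_inner_comm, mul_pow,
    Real.norm_eq_abs, sq_abs]
  ring

theorem hasDerivAt_exp_mul_norm_sq {f : ℝ → E} {f' : E} {x : ℝ} (hf : HasDerivAt f f' x)
    (μ a : ℝ) :
    HasDerivAt (fun x => exp (2 * μ * (x - a)) * ‖f x‖ ^ 2)
      (exp (2 * μ * (x - a)) * (2 * μ * ‖f x‖ ^ 2 + 2 * ⟪f x, f'⟫)) x := by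
  have hexp : HasDerivAt (fun x => exp (2 * μ * (x - a))) (exp (2 * μ * (x - a)) * (2 * μ)) x :=
    (((hasDerivAt_id x).sub_const a).const_mul (2 * μ)).exp.congr_deriv (by simp)
  exact (hexp.mul hf.norm_sq).congr_deriv (by ring)

theorem exp_mul_norm_deriv_sq_eq {f : ℝ → E} {x : ℝ} (hf : DifferentiableAt ℝ f x) (μ a : ℝ) :
    exp (2 * μ * (x - a)) * ‖deriv f x‖ ^ 2
      = exp (2 * μ * (x - a)) * ‖deriv f x + μ • f x‖ ^ 2
        - μ * deriv (fun x => exp (2 * μ * (x - a)) * ‖f x‖ ^ 2) x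
        + μ ^ 2 * (exp (2 * μ * (x - a)) * ‖f x‖ ^ 2) := by
  rw [(hasDerivAt_exp_mul_norm_sq hf.hasDerivAt μ a).deriv, norm_add_smul_sq]
  ring

theorem integral_Ioi_exp_mul_norm_deriv_sq {f : ℝ → E} (hf : ContDiff ℝ 1 f)
    (hc : HasCompactSupport f) (μ a b : ℝ) :
    ∫ x in Ioi b, exp (2 * μ * (x - a)) * ‖deriv f x‖ ^ 2
      = (∫ x in Ioi b, exp (2 * μ * (x - a)) * ‖deriv f x + μ • f x‖ ^ 2)
        + μ * (exp (2 * μ * (b - a)) * ‖f b‖ ^ 2)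
        + μ ^ 2 * ∫ x in Ioi b, exp (2 * μ * (x - a)) * ‖f x‖ ^ 2 := by
  set g := fun x => exp (2 * μ * (x - a)) * ‖f x‖ ^ 2
  have hg : ContDiff ℝ 1 g := by have := hf.norm_sq ℝ; fun_prop
  have hgc : HasCompactSupport g := hc.mul_norm_sq _
  have hint_sum : IntegrableOn
      (fun x => exp (2 * μ * (x - a)) * ‖deriv f x + μ • f x‖ ^ 2) (Ioi b) :=
    (hc.deriv.add (hc.smul_left (f := fun _ => μ))).integrable_mul_norm_sq (by fun_prop)
      ((hf.continuous_deriv le_rfl).add (continuous_const.smul hf.continuous))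
  have hint_f : IntegrableOn g (Ioi b) :=
    hc.integrable_mul_norm_sq (by fun_prop) hf.continuous
  have hint_dg : IntegrableOn (deriv g) (Ioi b) :=
    ((hg.continuous_deriv le_rfl).integrable_of_hasCompactSupport hgc.deriv).integrableOn
  calc ∫ x in Ioi b, exp (2 * μ * (x - a)) * ‖deriv f x‖ ^ 2
      = ∫ x in Ioi b, (exp (2 * μ * (x - a)) * ‖deriv f x + μ • f x‖ ^ 2 - μ * deriv g x
          + μ ^ 2 * g x) := by
        congr 1 with x
        exact exp_mul_norm_deriv_sq_eq (hf.differentiable one_ne_zero x) μ a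
    _ = _ := by
        rw [integral_add ?_ (hint_f.const_mul _), integral_sub hint_sum (hint_dg.const_mul μ),
          integral_const_mul, integral_const_mul, hgc.integral_Ioi_deriv_eq hg]
        · ring
        · exact hint_sum.sub (hint_dg.const_mul μ)

theorem scalar_weighted_estimate_general (a μ : ℝ)
    (f : ℝ → ℂ) (hf : ContDiff ℝ (⊤ : ℕ∞) f) (hc : HasCompactSupport f) :
    (∫ x₀ in Set.Ioi (0:ℝ), Real.exp (2 * μ * (x₀ - a)) * ‖deriv f x₀‖ ^ 2)
      ≥ μ * Real.exp (-2 * μ * a) * ‖f 0‖ ^ 2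
        + μ ^ 2 * ∫ x₀ in Set.Ioi (0:ℝ), Real.exp (2 * μ * (x₀ - a)) * ‖f x₀‖ ^ 2 := by
  rw [integral_Ioi_exp_mul_norm_deriv_sq (hf.of_le (by simp)) hc μ a 0,
    show 2 * μ * (0 - a) = -2 * μ * a by ring]
  have hsq_nonneg : 0 ≤ ∫ x in Ioi (0:ℝ), exp (2 * μ * (x - a)) * ‖deriv f x + μ • f x‖ ^ 2 :=
    setIntegral_nonneg measurableSet_Ioi fun x _ => by positivity
  linarith

/-- The scalar weighted estimate used in the proof of Lemma 2.1: for `a, μ > 0` and a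
smooth compactly supported `f : ℝ → ℂ`,
`∫₀^∞ e^{2μ(x₀−a)} |f′(x₀)|² dx₀ ≥ μ e^{−2μa} |f(0)|² + μ² ∫₀^∞ e^{2μ(x₀−a)} |f(x₀)|² dx₀`. -/
theorem scalar_weighted_estimate (a μ : ℝ) (ha : 0 < a) (hμ : 0 < μ)
    (f : ℝ → ℂ) (hf : ContDiff ℝ (⊤ : ℕ∞) f) (hc : HasCompactSupport f) :
    (∫ x₀ in Set.Ioi (0:ℝ), Real.exp (2 * μ * (x₀ - a)) * ‖deriv f x₀‖ ^ 2)
      ≥ μ * Real.exp (-2 * μ * a) * ‖f 0‖ ^ 2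
        + μ ^ 2 * ∫ x₀ in Set.Ioi (0:ℝ), Real.exp (2 * μ * (x₀ - a)) * ‖f x₀‖ ^ 2 :=
  scalar_weighted_estimate_general a μ f hf hc
end

section
/- Let θ > 0, a > 0, τ > 0, s ≥ 1, ξₙ ∈ ℝ, and set Mu = D₀²u − θ(D₁²u + x₁²ξₙ²u) and E(u(x₀)) = ‖D₀u(x₀)‖² + θ‖D₁u(x₀)‖² + θ‖x₁ξₙ u(x₀)‖². Then for every smooth compactly supported u : ℝ² → ℂ, 2∫₀^∞ W(x₀) Im⟨Mu(x₀), D₀u(x₀)⟩ dx₀ = W(0) E(u(0)) + 2τ⟨ξₙ⟩^{1/s} ∫₀^∞ W(x₀) E(u(x₀)) dx₀. -/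
open Complex MeasureTheory

/-- `D₀ = -i ∂/∂x₀` on functions of `(x₀, x₁) ∈ ℝ²`. -/
noncomputable def D0 (u : ℝ × ℝ → ℂ) : ℝ × ℝ → ℂ :=
  fun p => -Complex.I * fderiv ℝ u p (1, 0)

/-- `D₁ = -i ∂/∂x₁` on functions of `(x₀, x₁) ∈ ℝ²`. -/
noncomputable def D1 (u : ℝ × ℝ → ℂ) : ℝ × ℝ → ℂ :=
  fun p => -Complex.I * fderiv ℝ u p (0, 1)

/-- `‖v(x₀)‖² = ∫ |v(x₀, x₁)|² dx₁`. -/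
noncomputable def nsq (v : ℝ × ℝ → ℂ) (x₀ : ℝ) : ℝ :=
  ∫ x₁ : ℝ, ‖v (x₀, x₁)‖ ^ 2

/-- `⟨v(x₀), w(x₀)⟩ = ∫ v(x₀,x₁) conj(w(x₀,x₁)) dx₁`. -/
noncomputable def pair2 (v w : ℝ × ℝ → ℂ) (x₀ : ℝ) : ℂ :=
  ∫ x₁ : ℝ, v (x₀, x₁) * (starRingEnd ℂ) (w (x₀, x₁))

/-- The Gevrey weight `W(x₀) = exp(2τ⟨ξₙ⟩^{1/s}(x₀ − a))`, where `⟨ξₙ⟩ = √(1+ξₙ²)`. -/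
noncomputable def Wt (τ ξₙ s a : ℝ) (x₀ : ℝ) : ℝ :=
  Real.exp (2 * τ * (Real.sqrt (1 + ξₙ ^ 2)) ^ (1 / s) * (x₀ - a))

/-- The multiplier `M u = D₀²u − θ(D₁²u + x₁²ξₙ²u)`. -/
noncomputable def Mop (θ ξₙ : ℝ) (u : ℝ × ℝ → ℂ) : ℝ × ℝ → ℂ :=
  fun p => D0 (D0 u) p - (θ : ℂ) * (D1 (D1 u) p + (↑(p.2 ^ 2 * ξₙ ^ 2) : ℂ) * u p)

/-- `E(u(x₀)) = ‖D₀u(x₀)‖² + θ‖D₁u(x₀)‖² + θ‖x₁ξₙ u(x₀)‖²`. -/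
noncomputable def En (θ ξₙ : ℝ) (u : ℝ × ℝ → ℂ) (x₀ : ℝ) : ℝ :=
  nsq (D0 u) x₀ + θ * nsq (D1 u) x₀ + θ * nsq (fun p => (↑(p.2 * ξₙ) : ℂ) * u p) x₀

/-!
The energy density `e = |D₀u|² + θ|D₁u|² + θ|x₁ξₙu|²` satisfies, pointwise,
`∂₀e = -2 Im(Mu · conj D₀u) + 2θ ∂₁⟪D₁u, D₀u⟫_ℝ`, by the symmetry `∂₀D₁u = ∂₁D₀u`
of mixed partials. Integrating in `x₁` kills the divergence term, so
`d/dx₀ E(u(x₀)) = -2 Im⟨Mu(x₀), D₀u(x₀)⟩`. Since `W' = 2τ⟨ξₙ⟩^{1/s} W`, integrating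
`(W E)'` over `(0, ∞)`, where `W E` has compact support, gives the identity.
-/

open Set Filter ComplexConjugate
open scoped ContDiff

section SliceIntegral

variable {E : Type*} [NormedAddCommGroup E] {f g : ℝ × ℝ → E}

theorem apply_eq_zero_of_snd_notMem_image_tsupport {x y : ℝ}
    (hy : y ∉ Prod.snd '' tsupport f) : f (x, y) = 0 :=
  image_eq_zero_of_notMem_tsupport fun h => hy ⟨(x, y), h, rfl⟩

theorem HasCompactSupport.comp_prodMk_left (hf : HasCompactSupport f) (x : ℝ) :
    HasCompactSupport fun y => f (x, y) :=
  HasCompactSupport.intro (hf.image continuous_snd) fun _ =>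
    apply_eq_zero_of_snd_notMem_image_tsupport

theorem HasCompactSupport.integral_comp_prodMk_left [NormedSpace ℝ E]
    (hf : HasCompactSupport f) :
    HasCompactSupport fun x => ∫ y, f (x, y) :=
  HasCompactSupport.intro (hf.image continuous_fst) fun x hx => by
    have hzero : ∀ y, f (x, y) = 0 := fun y =>
      image_eq_zero_of_notMem_tsupport fun h => hx ⟨_, h, rfl⟩
    simp [hzero]

theorem integrable_comp_prodMk_left (hf : Continuous f) (hfc : HasCompactSupport f) (x : ℝ) :
    Integrable fun y => f (x, y) :=
  (hf.comp (Continuous.prodMk_right x)).integrable_of_hasCompactSupport (hfc.comp_prodMk_left x)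

theorem continuous_integral_comp_prodMk_left [NormedSpace ℝ E] (hf : Continuous f)
    (hfc : HasCompactSupport f) :
    Continuous fun x => ∫ y, f (x, y) := by
  have hrestrict : (fun x => ∫ y, f (x, y)) = fun x => ∫ y in Prod.snd '' tsupport f, f (x, y) :=
    funext fun _ => (setIntegral_eq_integral_of_forall_compl_eq_zero fun _ =>
      apply_eq_zero_of_snd_notMem_image_tsupport).symm
  rw [hrestrict]
  exact continuous_parametric_integral_of_continuous (f := fun x y => f (x, y)) hf
    (hfc.image continuous_snd)

theorem hasDerivAt_integral_comp_prodMk_left [NormedSpace ℝ E] (hf : Continuous f)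
    (hfc : HasCompactSupport f) (hg : Continuous g) (hgc : HasCompactSupport g)
    (hfg : ∀ x y, HasDerivAt (fun t => f (t, y)) (g (x, y)) x) (x : ℝ) :
    HasDerivAt (fun x => ∫ y, f (x, y)) (∫ y, g (x, y)) x := by
  obtain ⟨C, hC⟩ := hgc.exists_bound_of_continuous hg
  set K := Prod.snd '' tsupport g
  have hK : IsCompact K := hgc.image continuous_snd
  have hbound : ∀ x' y, ‖g (x', y)‖ ≤ K.indicator (fun _ => C) y := by
    intro x' y
    by_cases hy : y ∈ K
    · simpa [indicator_of_mem hy] using hC _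
    · rw [indicator_of_notMem hy, apply_eq_zero_of_snd_notMem_image_tsupport hy, norm_zero]
  exact (hasDerivAt_integral_of_dominated_loc_of_deriv_le (F := fun x y => f (x, y))
    univ_mem (.of_forall fun x' => (integrable_comp_prodMk_left hf hfc x').aestronglyMeasurable)
    (integrable_comp_prodMk_left hf hfc x)
    (integrable_comp_prodMk_left hg hgc x).aestronglyMeasurable
    (.of_forall fun y x' _ => hbound x' y)
    ((integrable_indicator_iff hK.measurableSet).2 (integrableOn_const hK.measure_lt_top.ne))
    (.of_forall fun y x' _ => hfg x' y)).2

end SliceIntegral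

section Operators

variable {u v : ℝ × ℝ → ℂ}

theorem contDiff_D0 (hu : ContDiff ℝ ∞ u) : ContDiff ℝ ∞ (D0 u) :=
  contDiff_const.mul ((hu.fderiv_right le_rfl).clm_apply contDiff_const)

theorem contDiff_D1 (hu : ContDiff ℝ ∞ u) : ContDiff ℝ ∞ (D1 u) :=
  contDiff_const.mul ((hu.fderiv_right le_rfl).clm_apply contDiff_const)

theorem hasDerivAt_D0 (hv : Differentiable ℝ v) (x y : ℝ) :
    HasDerivAt (fun t => v (t, y)) (I * D0 v (x, y)) x := by
  have h : HasDerivAt (fun t => v (t, y)) (fderiv ℝ v (x, y) (1, 0)) x :=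
    (hv (x, y)).hasFDerivAt.comp_hasDerivAt x ((hasDerivAt_id x).prodMk (hasDerivAt_const x y))
  exact h.congr_deriv (by simp [D0, ← mul_assoc])

theorem hasDerivAt_D1 (hv : Differentiable ℝ v) (x y : ℝ) :
    HasDerivAt (fun t => v (x, t)) (I * D1 v (x, y)) y := by
  have h : HasDerivAt (fun t => v (x, t)) (fderiv ℝ v (x, y) (0, 1)) y :=
    (hv (x, y)).hasFDerivAt.comp_hasDerivAt y ((hasDerivAt_const y x).prodMk (hasDerivAt_id y))
  exact h.congr_deriv (by simp [D1, ← mul_assoc])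

theorem D1_D0_comm (hu : ContDiff ℝ 2 u) : D1 (D0 u) = D0 (D1 u) := by
  funext p
  have hsymm := (hu.contDiffAt (x := p)).isSymmSndFDerivAt (by simp)
  have hdiff : Differentiable ℝ (fderiv ℝ u) :=
    (hu.fderiv_right (m := 1) le_rfl).differentiable one_ne_zero
  have hpartial (w : ℝ × ℝ) : Differentiable ℝ fun q => fderiv ℝ u q w :=
    hdiff.clm_apply (differentiable_const w)
  unfold D0 D1
  simp [fderiv_const_mul (hpartial _ p), fderiv_clm_apply (hdiff p), hsymm (1, 0) (0, 1)]

end Operators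

section Energy

open scoped InnerProductSpace

variable {θ ξₙ : ℝ} {u v w : ℝ × ℝ → ℂ}

theorem tsupport_D0_subset : tsupport (D0 u) ⊆ tsupport u :=
  tsupport_mul_subset_right.trans (tsupport_fderiv_apply_subset ℝ _)

theorem tsupport_D1_subset : tsupport (D1 u) ⊆ tsupport u :=
  tsupport_mul_subset_right.trans (tsupport_fderiv_apply_subset ℝ _)

theorem derivatives_eq_zero_of_notMem_tsupport {p : ℝ × ℝ} (hp : p ∉ tsupport u) :
    u p = 0 ∧ D0 u p = 0 ∧ D1 u p = 0 ∧ D0 (D0 u) p = 0 ∧ D1 (D0 u) p = 0 ∧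
      D1 (D1 u) p = 0 :=
  have h0 := notMem_subset tsupport_D0_subset hp
  have h1 := notMem_subset tsupport_D1_subset hp
  ⟨image_eq_zero_of_notMem_tsupport hp, image_eq_zero_of_notMem_tsupport h0,
    image_eq_zero_of_notMem_tsupport h1,
    image_eq_zero_of_notMem_tsupport (notMem_subset tsupport_D0_subset h0),
    image_eq_zero_of_notMem_tsupport (notMem_subset tsupport_D1_subset h0),
    image_eq_zero_of_notMem_tsupport (notMem_subset tsupport_D1_subset h1)⟩

theorem continuous_pair2 (hv : Continuous v) (hw : Continuous w) (hvc : HasCompactSupport v) :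
    Continuous (pair2 v w) :=
  continuous_integral_comp_prodMk_left (f := fun p => v p * conj (w p)) (by fun_prop) hvc.mul_right

theorem im_pair2 (hv : Continuous v) (hw : Continuous w) (hvc : HasCompactSupport v) (x : ℝ) :
    (pair2 v w x).im = ∫ y, (v (x, y) * conj (w (x, y))).im :=
  (integral_im (integrable_comp_prodMk_left (f := fun p => v p * conj (w p)) (by fun_prop)
    hvc.mul_right x)).symm

theorem continuous_Mop (hu : ContDiff ℝ ∞ u) : Continuous (Mop θ ξₙ u) := by
  have hAA := (contDiff_D0 (contDiff_D0 hu)).continuous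
  have hBB := (contDiff_D1 (contDiff_D1 hu)).continuous
  have hu0 := hu.continuous
  unfold Mop
  fun_prop

theorem HasCompactSupport.Mop (hc : HasCompactSupport u) : HasCompactSupport (Mop θ ξₙ u) :=
  HasCompactSupport.intro hc fun p hp => by
    obtain ⟨h, -, -, h00, -, h11⟩ := derivatives_eq_zero_of_notMem_tsupport hp
    simp [_root_.Mop, h, h00, h11]

noncomputable def energyDensity (θ ξₙ : ℝ) (u : ℝ × ℝ → ℂ) (p : ℝ × ℝ) : ℝ :=
  ‖D0 u p‖ ^ 2 + θ * ‖D1 u p‖ ^ 2 + θ * ‖(↑(p.2 * ξₙ) : ℂ) * u p‖ ^ 2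

noncomputable def flux (u : ℝ × ℝ → ℂ) (p : ℝ × ℝ) : ℝ :=
  ⟪D1 u p, D0 u p⟫_ℝ

noncomputable def fluxDeriv (u : ℝ × ℝ → ℂ) (p : ℝ × ℝ) : ℝ :=
  ⟪D1 u p, I * D1 (D0 u) p⟫_ℝ + ⟪I * D1 (D1 u) p, D0 u p⟫_ℝ

theorem hasDerivAt_flux (hu : ContDiff ℝ ∞ u) (x y : ℝ) :
    HasDerivAt (fun t => flux u (x, t)) (fluxDeriv u (x, y)) y :=
  (hasDerivAt_D1 ((contDiff_D1 hu).differentiable (by simp)) x y).inner ℝ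
    (hasDerivAt_D1 ((contDiff_D0 hu).differentiable (by simp)) x y)

theorem integral_fluxDeriv (hu : ContDiff ℝ ∞ u) (hc : HasCompactSupport u) (x : ℝ) :
    ∫ y, fluxDeriv u (x, y) = 0 := by
  have hA := (contDiff_D0 hu).continuous
  have hB := (contDiff_D1 hu).continuous
  have hBA := (contDiff_D1 (contDiff_D0 hu)).continuous
  have hBB := (contDiff_D1 (contDiff_D1 hu)).continuous
  refine integral_eq_zero_of_hasDerivAt_of_integrable (hasDerivAt_flux hu x)
    (integrable_comp_prodMk_left (by unfold fluxDeriv; fun_prop) (.intro hc fun p hp => ?_) x)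
    (integrable_comp_prodMk_left (by unfold flux; fun_prop) (.intro hc fun p hp => ?_) x)
  all_goals
    obtain ⟨-, h0, h1, -, -, -⟩ := derivatives_eq_zero_of_notMem_tsupport hp
    simp [fluxDeriv, flux, h0, h1]

theorem hasDerivAt_energyDensity (hu : ContDiff ℝ ∞ u) (x y : ℝ) :
    HasDerivAt (fun t => energyDensity θ ξₙ u (t, y))
      (-2 * (Mop θ ξₙ u (x, y) * conj (D0 u (x, y))).im + 2 * θ * fluxDeriv u (x, y)) x := by
  have hA := (hasDerivAt_D0 ((contDiff_D0 hu).differentiable (by simp)) x y).norm_sq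
  have hB := (hasDerivAt_D0 ((contDiff_D1 hu).differentiable (by simp)) x y).norm_sq
  have hU := ((hasDerivAt_D0 (hu.differentiable (by simp)) x y).const_mul
    ((y * ξₙ : ℝ) : ℂ)).norm_sq
  refine ((hA.add (hB.const_mul θ)).add (hU.const_mul θ)).congr_deriv ?_
  rw [← D1_D0_comm (hu.of_le ENat.LEInfty.out)]
  simp only [fluxDeriv, Mop, Complex.inner, mul_re, mul_im, add_re, add_im, sub_re, sub_im,
    I_re, I_im, conj_re, conj_im, ofReal_re, ofReal_im]
  ring

theorem En_eq_integral_energyDensity (hu : ContDiff ℝ ∞ u) (hc : HasCompactSupport u) (x : ℝ) :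
    En θ ξₙ u x = ∫ y, energyDensity θ ξₙ u (x, y) := by
  have hu0 := hu.continuous
  have hint (F : ℝ × ℝ → ℂ) (hF : Continuous F) (hF0 : ∀ p ∉ tsupport u, F p = 0) :
      Integrable fun y => ‖F (x, y)‖ ^ 2 :=
    integrable_comp_prodMk_left (f := fun p => ‖F p‖ ^ 2) (by fun_prop)
      (.intro hc fun p hp => by simp [hF0 p hp]) x
  have hA := hint _ (contDiff_D0 hu).continuous fun p hp =>
    (derivatives_eq_zero_of_notMem_tsupport hp).2.1
  have hB := hint _ (contDiff_D1 hu).continuous fun p hp =>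
    (derivatives_eq_zero_of_notMem_tsupport hp).2.2.1
  have hU := hint (fun p => (↑(p.2 * ξₙ) : ℂ) * u p) (by fun_prop) fun p hp => by
    simp [image_eq_zero_of_notMem_tsupport hp]
  simp only [En, nsq, energyDensity]
  rw [integral_add, integral_add, integral_const_mul, integral_const_mul]
  exacts [hA, hB.const_mul θ, hA.add (hB.const_mul θ), hU.const_mul θ]

theorem HasCompactSupport.energyDensity (hc : HasCompactSupport u) :
    HasCompactSupport (energyDensity θ ξₙ u) :=
  .intro hc fun p hp => by
    obtain ⟨h, h0, h1, -⟩ := derivatives_eq_zero_of_notMem_tsupport hp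
    simp [_root_.energyDensity, h, h0, h1]

theorem HasCompactSupport.En (hc : HasCompactSupport u) (hu : ContDiff ℝ ∞ u) :
    HasCompactSupport (En θ ξₙ u) := by
  rw [funext (En_eq_integral_energyDensity hu hc)]
  exact hc.energyDensity.integral_comp_prodMk_left

theorem hasDerivAt_En (hu : ContDiff ℝ ∞ u) (hc : HasCompactSupport u) (x : ℝ) :
    HasDerivAt (En θ ξₙ u) (-2 * (pair2 (Mop θ ξₙ u) (D0 u) x).im) x := by
  have hu0 := hu.continuous
  have hA := (contDiff_D0 hu).continuous
  have hB := (contDiff_D1 hu).continuous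
  have hBA := (contDiff_D1 (contDiff_D0 hu)).continuous
  have hBB := (contDiff_D1 (contDiff_D1 hu)).continuous
  have hM := continuous_Mop (θ := θ) (ξₙ := ξₙ) hu
  have hMc := hc.Mop (θ := θ) (ξₙ := ξₙ)
  have hm : Continuous fun p => (Mop θ ξₙ u p * conj (D0 u p)).im :=
    continuous_im.comp (by fun_prop)
  have hmc : HasCompactSupport fun p => (Mop θ ξₙ u p * conj (D0 u p)).im :=
    .intro hc fun p hp => by
      obtain ⟨h, h0, -, h00, -, h11⟩ := derivatives_eq_zero_of_notMem_tsupport hp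
      simp [Mop, h, h0, h00, h11]
  have hF : Continuous (fluxDeriv u) := by unfold fluxDeriv; fun_prop
  have hFc : HasCompactSupport (fluxDeriv u) := .intro hc fun p hp => by
    obtain ⟨-, h0, h1, -, h10, h11⟩ := derivatives_eq_zero_of_notMem_tsupport hp
    simp [fluxDeriv, h0, h1, h10, h11]
  have hderiv := hasDerivAt_integral_comp_prodMk_left (f := energyDensity θ ξₙ u)
    (g := fun p => -2 * (Mop θ ξₙ u p * conj (D0 u p)).im + 2 * θ * fluxDeriv u p)
    (by unfold energyDensity; fun_prop)
    hc.energyDensity (by fun_prop) (hmc.mul_left.add hFc.mul_left)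
    (hasDerivAt_energyDensity hu) x
  rw [funext (En_eq_integral_energyDensity hu hc)]
  refine hderiv.congr_deriv ?_
  rw [integral_add ((integrable_comp_prodMk_left hm hmc x).const_mul _)
      ((integrable_comp_prodMk_left hF hFc x).const_mul _),
    integral_const_mul, integral_const_mul, integral_fluxDeriv hu hc, im_pair2 hM hA hMc]
  ring

end Energy

theorem integral_Ioi_mul_deriv_of_hasDerivAt {W F F' : ℝ → ℝ} {c : ℝ} (b : ℝ)
    (hW : ∀ x, HasDerivAt W (c * W x) x) (hF : ∀ x, HasDerivAt F (F' x) x)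
    (hF' : Continuous F') (hFc : HasCompactSupport F) :
    ∫ x in Ioi b, W x * F' x = -(W b * F b) - c * ∫ x in Ioi b, W x * F x := by
  have hWc : Continuous W := continuous_iff_continuousAt.2 fun x => (hW x).continuousAt
  have hFc' : Continuous F := continuous_iff_continuousAt.2 fun x => (hF x).continuousAt
  have hprod (x : ℝ) : HasDerivAt (fun x => W x * F x) (c * (W x * F x) + W x * F' x) x :=
    ((hW x).mul (hF x)).congr_deriv (by ring)
  have hderiv : deriv (fun x => W x * F x) = fun x => c * (W x * F x) + W x * F' x :=
    funext fun x => (hprod x).deriv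
  have hWF : Integrable fun x => W x * F x :=
    (hWc.mul hFc').integrable_of_hasCompactSupport hFc.mul_left
  have hWF' : Integrable fun x => W x * F' x :=
    (hWc.mul hF').integrable_of_hasCompactSupport
      ((funext fun x => (hF x).deriv : deriv F = F') ▸ hFc.deriv).mul_left
  have hFTC := HasCompactSupport.integral_Ioi_deriv_eq
    (contDiff_one_iff_deriv.2 ⟨fun x => (hprod x).differentiableAt, by rw [hderiv]; fun_prop⟩)
    hFc.mul_left b
  rw [hderiv, integral_add (hWF.const_mul c).integrableOn hWF'.integrableOn,
    integral_const_mul] at hFTC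
  linarith

theorem hasDerivAt_Wt (τ ξₙ s a x : ℝ) :
    HasDerivAt (Wt τ ξₙ s a) (2 * τ * Real.sqrt (1 + ξₙ ^ 2) ^ (1 / s) * Wt τ ξₙ s a x) x :=
  (((hasDerivAt_id x).sub_const a).const_mul _).exp.congr_deriv (by simp [Wt, mul_comm])

theorem weighted_energy_identity_general (θ a τ s ξₙ : ℝ)
    (u : ℝ × ℝ → ℂ) (hu : ContDiff ℝ (⊤ : ℕ∞) u) (hc : HasCompactSupport u) :
    2 * ∫ x₀ in Set.Ioi (0:ℝ), Wt τ ξₙ s a x₀ * (pair2 (Mop θ ξₙ u) (D0 u) x₀).im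
      = Wt τ ξₙ s a 0 * En θ ξₙ u 0
        + 2 * τ * (Real.sqrt (1 + ξₙ ^ 2)) ^ (1 / s)
          * ∫ x₀ in Set.Ioi (0:ℝ), Wt τ ξₙ s a x₀ * En θ ξₙ u x₀ := by
  have hP : Continuous fun x => (pair2 (Mop θ ξₙ u) (D0 u) x).im :=
    continuous_im.comp (continuous_pair2 (continuous_Mop hu) (contDiff_D0 hu).continuous hc.Mop)
  have key := integral_Ioi_mul_deriv_of_hasDerivAt 0 (hasDerivAt_Wt τ ξₙ s a)
    (hasDerivAt_En hu hc) (by fun_prop) (hc.En hu)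
  simp only [mul_left_comm _ (-2 : ℝ), integral_const_mul] at key
  linarith

/-- The energy identity (2.24)–(2.25):
`2∫₀^∞ W Im⟨Mu, D₀u⟩ dx₀ = W(0)E(u(0)) + 2τ⟨ξₙ⟩^{1/s} ∫₀^∞ W E(u(x₀)) dx₀`. -/
theorem weighted_energy_identity (θ a τ s ξₙ : ℝ)
    (hθ : 0 < θ) (ha : 0 < a) (hτ : 0 < τ) (hs : 1 ≤ s)
    (u : ℝ × ℝ → ℂ) (hu : ContDiff ℝ (⊤ : ℕ∞) u) (hc : HasCompactSupport u) :
    2 * ∫ x₀ in Set.Ioi (0:ℝ), Wt τ ξₙ s a x₀ * (pair2 (Mop θ ξₙ u) (D0 u) x₀).im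
      = Wt τ ξₙ s a 0 * En θ ξₙ u 0
        + 2 * τ * (Real.sqrt (1 + ξₙ ^ 2)) ^ (1 / s)
          * ∫ x₀ in Set.Ioi (0:ℝ), Wt τ ξₙ s a x₀ * En θ ξₙ u x₀ :=
  weighted_energy_identity_general θ a τ s ξₙ u hu hc
end

section
/- Let n ≥ 2, b₀ > 0, λ > 0, R > 0, θ ∈ ℝ. Set A = λ^{1/2} b₀^{1/5} R^{−1/5} e^{−iθ/5}, B = (1/3) b₀^{−4/5} R^{4/5} e^{4iθ/5}, ζ = −(1/3) b₀^{−8/5} R^{8/5} e^{8iθ/5}, and μ = b₀^{−2/5} R^{12/5} e^{12iθ/5} (2/(27b₀²) − 1). Let w : ℂ → ℂ be an entire function satisfying w″(y) = (y³ + ζy + μ)·w(y) for all y ∈ ℂ. Then the smooth function U : ℝ^{n+1} → ℂ defined by U(x) = exp(i x₀ λ^{1/2} R e^{iθ} + i xₙ λ) · w(A x₁ + B) satisfies P U = 0 on all of ℝ^{n+1}, where Pu = D₀³u − (D₁² + x₁²Dₙ²)D₀u − b₀x₁³Dₙ³u. In particular, if b₀ = √2/(3√3) then μ = 0 and w may be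 taken to be any entire solution of w″(y) = (y³ + ζy)w(y). -/
open Complex

/-- Partial derivative in the `j`-th coordinate direction. -/
noncomputable def pd {N : ℕ} (j : Fin N) (f : (Fin N → ℝ) → ℂ) : (Fin N → ℝ) → ℂ :=
  fun x => fderiv ℝ f x (Pi.single j 1)

/-- `D_j = -i ∂/∂x_j`. -/
noncomputable def Dop {N : ℕ} (j : Fin N) (f : (Fin N → ℝ) → ℂ) : (Fin N → ℝ) → ℂ :=
  fun x => -Complex.I * pd j f x

/-- The operator `P u = D₀³u − (D₁² + x₁²Dₙ²)D₀u − b₀ x₁³ Dₙ³ u` on `ℝ^{n+1}`. -/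
noncomputable def Pop (n : ℕ) (b₀ : ℝ) (u : (Fin (n+1) → ℝ) → ℂ) : (Fin (n+1) → ℝ) → ℂ :=
  fun x =>
    Dop 0 (Dop 0 (Dop 0 u)) x
      - (Dop 1 (Dop 1 (Dop 0 u)) x
         + (↑(x 1) : ℂ)^2 * Dop (Fin.last n) (Dop (Fin.last n) (Dop 0 u)) x)
      - (b₀ : ℂ) * (↑(x 1) : ℂ)^3 *
          Dop (Fin.last n) (Dop (Fin.last n) (Dop (Fin.last n) u)) x

/-!
On the ansatz `U(x) = exp(i(ξx₀ + ηxₙ)) w(Ax₁ + B)` the operators `D₀` and `Dₙ` act as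
multiplication by `ξ` and `η`, and `D₁` as `−iA d/dy` on the profile, so
`PU = exp(⋯)(ξ³w + A²ξw″ − x₁²η²ξw − b₀x₁³η³w)`. Using the equation for `w`, this vanishes
once `ξ³ + A²ξ(y³ + ζy + μ) − x₁²η²ξ − b₀x₁³η³ = 0` for `y = Ax₁ + B`. Writing `b₀ = a⁵`,
`R = r⁵`, `λ = s²` and `z = r e^{iθ/5}`, so that `ξ = s z⁵`, this is a polynomial identity
in `x₁` that holds by completing a cube.
-/

noncomputable def planeWaveProfile {N : ℕ} (i₀ i₁ iₙ : Fin N) (ξ η A B : ℂ) (v : ℂ → ℂ) :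
    (Fin N → ℝ) → ℂ :=
  fun x => exp (I * (ξ * x i₀ + η * x iₙ)) * v (A * x i₁ + B)

section planeWaveProfile

variable {N : ℕ} {i₀ i₁ iₙ : Fin N} {ξ η A B : ℂ} {v : ℂ → ℂ}

theorem pd_planeWaveProfile (hv : Differentiable ℂ v) (j : Fin N) (x : Fin N → ℝ) :
    pd j (planeWaveProfile i₀ i₁ iₙ ξ η A B v) x =
      exp (I * (ξ * x i₀ + η * x iₙ)) *
        (I * (ξ * (Pi.single j 1 : Fin N → ℝ) i₀ + η * (Pi.single j 1 : Fin N → ℝ) iₙ) *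
            v (A * x i₁ + B) +
          A * (Pi.single j 1 : Fin N → ℝ) i₁ * deriv v (A * x i₁ + B)) := by
  have hcoord (k : Fin N) : HasFDerivAt (fun x : Fin N → ℝ => (x k : ℂ))
      (ofRealCLM.comp (ContinuousLinearMap.proj k)) x :=
    ofRealCLM.hasFDerivAt.comp x (hasFDerivAt_apply k x)
  have hphase := ((((hcoord i₀).const_mul ξ).add ((hcoord iₙ).const_mul η)).const_mul I).cexp
  have hprofile := (((hv _).hasDerivAt.hasFDerivAt.restrictScalars ℝ).comp x
    (((hcoord i₁).const_mul A).add_const B))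
  have h := hphase.mul hprofile
  simp only [Function.comp_def, Pi.add_apply, Pi.mul_def] at h
  unfold pd planeWaveProfile
  rw [h.fderiv]
  simp only [smul_add, add_apply, smul_apply, ContinuousLinearMap.comp_apply,
    ContinuousLinearMap.proj_apply, ofRealCLM_apply, smul_eq_mul, ContinuousLinearMap.coe_restrictScalars',
    ContinuousLinearMap.toSpanSingleton_apply]
  ring

theorem Dop_planeWaveProfile_phase_fst (h₁ : i₁ ≠ i₀) (hₙ : iₙ ≠ i₀) (hv : Differentiable ℂ v) :
    Dop i₀ (planeWaveProfile i₀ i₁ iₙ ξ η A B v) =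
      planeWaveProfile i₀ i₁ iₙ ξ η A B (fun z => ξ * v z) := by
  funext x
  simp only [Dop, pd_planeWaveProfile hv, Pi.single_eq_same, Pi.single_eq_of_ne h₁,
    Pi.single_eq_of_ne hₙ, planeWaveProfile, ofReal_one, ofReal_zero]
  ring_nf
  simp only [I_sq]
  ring

theorem Dop_planeWaveProfile_phase_snd (h₀ : i₀ ≠ iₙ) (h₁ : i₁ ≠ iₙ) (hv : Differentiable ℂ v) :
    Dop iₙ (planeWaveProfile i₀ i₁ iₙ ξ η A B v) =
      planeWaveProfile i₀ i₁ iₙ ξ η A B (fun z => η * v z) := by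
  funext x
  simp only [Dop, pd_planeWaveProfile hv, Pi.single_eq_same, Pi.single_eq_of_ne h₀,
    Pi.single_eq_of_ne h₁, planeWaveProfile, ofReal_one, ofReal_zero]
  ring_nf
  simp only [I_sq]
  ring

theorem Dop_planeWaveProfile_profile (h₀ : i₀ ≠ i₁) (hₙ : iₙ ≠ i₁) (hv : Differentiable ℂ v) :
    Dop i₁ (planeWaveProfile i₀ i₁ iₙ ξ η A B v) =
      planeWaveProfile i₀ i₁ iₙ ξ η A B (fun z => -I * A * deriv v z) := by
  funext x
  simp only [Dop, pd_planeWaveProfile hv, Pi.single_eq_same, Pi.single_eq_of_ne h₀,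
    Pi.single_eq_of_ne hₙ, planeWaveProfile, ofReal_one, ofReal_zero]
  ring

end planeWaveProfile

theorem Pop_planeWaveProfile {n : ℕ} (hn : 2 ≤ n) {b₀ : ℝ} {ξ η A B : ℂ} {w : ℂ → ℂ}
    (hw : Differentiable ℂ w) (x : Fin (n + 1) → ℝ) :
    Pop n b₀ (planeWaveProfile 0 1 (Fin.last n) ξ η A B w) x =
      exp (I * (ξ * x 0 + η * x (Fin.last n))) *
        (ξ ^ 3 * w (A * x 1 + B) + A ^ 2 * ξ * deriv (deriv w) (A * x 1 + B)
          - (x 1 : ℂ) ^ 2 * η ^ 2 * ξ * w (A * x 1 + B)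
          - b₀ * (x 1 : ℂ) ^ 3 * η ^ 3 * w (A * x 1 + B)) := by
  have h01 : (0 : Fin (n + 1)) ≠ 1 := by
    rw [Ne, Fin.ext_iff, Fin.val_one', Fin.val_zero, Nat.mod_eq_of_lt (by omega)]; omega
  have h0n : (0 : Fin (n + 1)) ≠ Fin.last n := by
    rw [Ne, Fin.ext_iff, Fin.val_last, Fin.val_zero]; omega
  have h1n : (1 : Fin (n + 1)) ≠ Fin.last n := by
    rw [Ne, Fin.ext_iff, Fin.val_last, Fin.val_one', Nat.mod_eq_of_lt (by omega)]; omega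
  have hw' := hw.deriv
  simp (disch := fun_prop) only [Pop, Dop_planeWaveProfile_phase_fst h01.symm h0n.symm,
    Dop_planeWaveProfile_phase_snd h0n h1n, Dop_planeWaveProfile_profile h01 h1n.symm,
    deriv_const_mul_field']
  simp only [planeWaveProfile]
  ring_nf
  simp only [I_sq]
  ring

/-- With `A = s a / z`, `ξ = s z⁵`, `u = A t` and `β = z⁴ / (3 a⁴)`, dividing
`a⁵s⁶t³ + s⁵z⁵t² − ξ³` by `A²ξ` leaves `u³ + 3βu² − z¹²/a²`; completing the cube in `y = u + β`
gives `y³ − 3β²y + 2β³ − z¹²/a²`, which is where `B = β`, `ζ = −3β²` and `μ = 2β³ − z¹²/a²`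
come from. -/
theorem cube_completion_identity {a z : ℂ} (s : ℂ) (ha : a ≠ 0) (hz : z ≠ 0) (t : ℂ) :
    (s * z ^ 5) ^ 3 + (s * a / z) ^ 2 * (s * z ^ 5) *
        ((s * a / z * t + z ^ 4 / (3 * a ^ 4)) ^ 3
          + -(z ^ 8 / (3 * a ^ 8)) * (s * a / z * t + z ^ 4 / (3 * a ^ 4))
          + z ^ 12 / a ^ 2 * (2 / (27 * a ^ 10) - 1))
      - t ^ 2 * (s ^ 2) ^ 2 * (s * z ^ 5) - a ^ 5 * t ^ 3 * (s ^ 2) ^ 3 = 0 := by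
  field_simp
  ring

theorem reduced_symbol_eq_zero {b₀ lam R θ : ℝ} (hb₀ : 0 < b₀) (hlam : 0 < lam) (hR : 0 < R)
    {A B ζ μ : ℂ}
    (hA : A = (↑(lam ^ ((1:ℝ)/2) * b₀ ^ ((1:ℝ)/5) * R ^ (-(1:ℝ)/5)) : ℂ)
            * exp (-(θ : ℂ) * I / 5))
    (hB : B = (↑((1/3 : ℝ) * b₀ ^ (-(4:ℝ)/5) * R ^ ((4:ℝ)/5)) : ℂ)
            * exp (4 * (θ : ℂ) * I / 5))
    (hζ : ζ = -((↑((1/3 : ℝ) * b₀ ^ (-(8:ℝ)/5) * R ^ ((8:ℝ)/5)) : ℂ)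
            * exp (8 * (θ : ℂ) * I / 5)))
    (hμ : μ = (↑(b₀ ^ (-(2:ℝ)/5) * R ^ ((12:ℝ)/5)) : ℂ)
            * exp (12 * (θ : ℂ) * I / 5)
            * ((2 / (27 * b₀ ^ 2) - 1 : ℝ) : ℂ))
    {ξ : ℂ} (hξ : ξ = (↑(lam ^ ((1:ℝ)/2) * R) : ℂ) * exp ((θ : ℂ) * I)) (t : ℂ) :
    ξ ^ 3 + A ^ 2 * ξ * ((A * t + B) ^ 3 + ζ * (A * t + B) + μ) - t ^ 2 * (lam : ℂ) ^ 2 * ξ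
      - b₀ * t ^ 3 * (lam : ℂ) ^ 3 = 0 := by
  subst hξ
  obtain ⟨a, ha, rfl⟩ : ∃ a, 0 < a ∧ a ^ 5 = b₀ :=
    ⟨b₀ ^ (5⁻¹ : ℝ), by positivity, Real.rpow_inv_natCast_pow hb₀.le (by norm_num)⟩
  obtain ⟨r, hr, rfl⟩ : ∃ r, 0 < r ∧ r ^ 5 = R :=
    ⟨R ^ (5⁻¹ : ℝ), by positivity, Real.rpow_inv_natCast_pow hR.le (by norm_num)⟩
  obtain ⟨s, hs, rfl⟩ : ∃ s, 0 < s ∧ s ^ 2 = lam :=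
    ⟨lam ^ (2⁻¹ : ℝ), by positivity, Real.rpow_inv_natCast_pow hlam.le (by norm_num)⟩
  simp only [← Real.rpow_natCast_mul ha.le, ← Real.rpow_natCast_mul hr.le,
    ← Real.rpow_natCast_mul hs.le] at hA hB hζ hμ ⊢
  norm_num [Real.rpow_neg_one] at hA hB hζ hμ ⊢
  set z : ℂ := r * exp (θ * I / 5) with hz
  have hz0 : z ≠ 0 := mul_ne_zero (ofReal_ne_zero.mpr hr.ne') (exp_ne_zero _)
  have hA' : A = s * a / z := by
    rw [hA, hz, ← div_div, div_eq_mul_inv _ (exp _), ← exp_neg]; ring_nf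
  have hB' : B = z ^ 4 / (3 * a ^ 4) := by
    rw [hB, hz, mul_pow, ← exp_nat_mul]; ring_nf
  have hζ' : ζ = -(z ^ 8 / (3 * a ^ 8)) := by
    rw [hζ, hz, mul_pow, ← exp_nat_mul]; ring_nf
  have hμ' : μ = z ^ 12 / a ^ 2 * (2 / (27 * a ^ 10) - 1) := by
    rw [hμ, hz, mul_pow, ← exp_nat_mul]; ring_nf
  have hξ : (s : ℂ) * r ^ 5 * exp (θ * I) = s * z ^ 5 := by
    rw [hz, mul_pow, ← exp_nat_mul]; ring_nf
  rw [hξ, hA', hB', hζ', hμ']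
  exact cube_completion_identity s (ofReal_ne_zero.mpr ha.ne') hz0 t

/-- The exact-solution computation (3.71)–(3.77): with the stated choices of
`A, B, ζ, μ` and any entire solution `w` of `w″(y) = (y³ + ζy + μ)w(y)`, the function
`U(x) = exp(i x₀ λ^{1/2} R e^{iθ} + i xₙ λ) · w(A x₁ + B)` solves `P U = 0` on `ℝ^{n+1}`;
moreover, if `b₀ = √2/(3√3)` then `μ = 0`. -/
theorem exact_null_solution (n : ℕ) (hn : 2 ≤ n) (b₀ lam R θ : ℝ)
    (hb₀ : 0 < b₀) (hlam : 0 < lam) (hR : 0 < R)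
    (A B ζ μ : ℂ)
    (hA : A = (↑(lam ^ ((1:ℝ)/2) * b₀ ^ ((1:ℝ)/5) * R ^ (-(1:ℝ)/5)) : ℂ)
            * Complex.exp (-(θ : ℂ) * Complex.I / 5))
    (hB : B = (↑((1/3 : ℝ) * b₀ ^ (-(4:ℝ)/5) * R ^ ((4:ℝ)/5)) : ℂ)
            * Complex.exp (4 * (θ : ℂ) * Complex.I / 5))
    (hζ : ζ = -((↑((1/3 : ℝ) * b₀ ^ (-(8:ℝ)/5) * R ^ ((8:ℝ)/5)) : ℂ)
            * Complex.exp (8 * (θ : ℂ) * Complex.I / 5)))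
    (hμ : μ = (↑(b₀ ^ (-(2:ℝ)/5) * R ^ ((12:ℝ)/5)) : ℂ)
            * Complex.exp (12 * (θ : ℂ) * Complex.I / 5)
            * ((2 / (27 * b₀ ^ 2) - 1 : ℝ) : ℂ))
    (w : ℂ → ℂ) (hw : Differentiable ℂ w)
    (hweq : ∀ y : ℂ, deriv (deriv w) y = (y ^ 3 + ζ * y + μ) * w y) :
    (∀ x : Fin (n+1) → ℝ,
        Pop n b₀
          (fun x =>
            Complex.exp (Complex.I * (↑(x 0) : ℂ) * (↑(lam ^ ((1:ℝ)/2) * R) : ℂ)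
                * Complex.exp ((θ : ℂ) * Complex.I)
              + Complex.I * (↑(x (Fin.last n)) : ℂ) * (lam : ℂ))
              * w (A * (↑(x 1) : ℂ) + B)) x = 0)
      ∧ (b₀ = Real.sqrt 2 / (3 * Real.sqrt 3) → μ = 0) := by
  refine ⟨fun x => ?_, fun hb => ?_⟩
  · have hsymbol := reduced_symbol_eq_zero hb₀ hlam hR hA hB hζ hμ rfl (x 1)
    convert_to Pop n b₀ (planeWaveProfile 0 1 (Fin.last n)
      ((↑(lam ^ ((1:ℝ)/2) * R) : ℂ) * exp ((θ : ℂ) * I)) lam A B w) x = 0 using 3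
    · simp only [planeWaveProfile]
      ring_nf
    rw [Pop_planeWaveProfile hn hw, hweq]
    linear_combination (exp (I * ((↑(lam ^ ((1:ℝ)/2) * R) : ℂ) * exp ((θ : ℂ) * I) * x 0
      + lam * x (Fin.last n))) * w (A * x 1 + B)) * hsymbol
  · rw [hμ, hb, div_pow, mul_pow, Real.sq_sqrt zero_le_two, Real.sq_sqrt zero_le_three]
    norm_num
end

section
/- Let α, β, ζ ∈ ℂ with α ≠ 0, and let w : ℂ → ℂ be an entire function satisfying w″(y) = (y³ + ζy)·w(y) for all y ∈ ℂ. Assume that the restriction x ↦ w(αx + β) (x ∈ ℝ) is a Schwartz function on ℝ, and that ∫_ℝ x^k · w(αx + β) dx = 0 for k = 0, 1, 2. Then w is identically zero on ℂ. -/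
/-!
Put `g(x) = w(αx + β)` and `v = 𝓕 g`. The equation `w″ = (y³ + ζy) w` becomes
`g″ = α² ((αx + β)³ + ζ(αx + β)) g` on the real line, and under the Fourier transform,
multiplication by `x` turns into `-(1 / 2πi) d/dξ` while `d/dx` turns into multiplication by
`2πiξ`. So `v` solves a linear third-order ODE with leading coefficient `α⁵ ≠ 0`, and
`v(0), v′(0), v″(0)` are multiples of the moments of order `0, 1, 2`. These vanish, so `v ≡ 0` by
uniqueness for linear ODEs, hence `g ≡ 0` by Fourier inversion, and the entire function `w`,
vanishing on a line, vanishes identically.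
-/

open Complex MeasureTheory Set Filter Topology SchwartzMap FourierTransform LineDeriv

theorem ContinuousLinearMap.eq_zero_of_hasDerivAt_apply {E : Type*} [NormedAddCommGroup E]
    [NormedSpace ℝ E] {L : ℝ → E →L[ℝ] E} (hL : Continuous L) {u : ℝ → E}
    (hu : ∀ t, HasDerivAt u (L t (u t)) t) {t₀ : ℝ} (h₀ : u t₀ = 0) (t : ℝ) : u t = 0 := by
  set T := |t| + |t₀| + 1
  have hmem : ∀ {s : ℝ}, |s| < T → s ∈ Ioo (-T) T := fun h => abs_lt.mp h
  obtain ⟨C, hC⟩ :=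
    (isCompact_Icc (a := -T) (b := T)).exists_bound_of_continuousOn hL.continuousOn
  have hlip : ∀ s ∈ Ioo (-T) T, LipschitzOnWith C.toNNReal (L s) univ := fun s hs =>
    ((L s).lipschitz.weaken <| by
      rw [← NNReal.coe_le_coe, coe_nnnorm]
      exact (hC s (Ioo_subset_Icc_self hs)).trans (Real.le_coe_toNNReal C)).lipschitzOnWith
  exact ODE_solution_unique_of_mem_Icc hlip (hmem (by linarith [abs_nonneg t]))
    (f := u) (g := 0) (fun s _ => (hu s).continuousAt.continuousWithinAt) (fun s _ => hu s)
    (fun _ _ => trivial) continuousOn_const (fun s _ => by simp) (fun _ _ => trivial) h₀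
    (Ioo_subset_Icc_self (hmem (by linarith [abs_nonneg t₀])))

open Matrix in
theorem Matrix.eq_zero_of_hasDerivAt_mulVec {𝕜 ι : Type*} [RCLike 𝕜] [Fintype ι] [DecidableEq ι]
    {A : ℝ → Matrix ι ι 𝕜} (hA : Continuous A) {u : ℝ → ι → 𝕜}
    (hu : ∀ t, HasDerivAt u (A t *ᵥ u t) t) {t₀ : ℝ} (h₀ : u t₀ = 0) (t : ℝ) : u t = 0 := by
  let toCLM : Matrix ι ι 𝕜 →ₗ[𝕜] (ι → 𝕜) →L[𝕜] ι → 𝕜 :=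
    LinearMap.toContinuousLinearMap.toLinearMap ∘ₗ Matrix.toLin'.toLinearMap
  have hcont : Continuous fun s => (toCLM (A s)).restrictScalars ℝ :=
    (ContinuousLinearMap.restrictScalarsL 𝕜 (ι → 𝕜) (ι → 𝕜) ℝ 𝕜).continuous.comp
      (toCLM.continuous_of_finiteDimensional.comp hA)
  exact ContinuousLinearMap.eq_zero_of_hasDerivAt_apply hcont (by simpa [toCLM] using hu) h₀ t

theorem HasDerivAt.comp_mul_ofReal_add {f : ℂ → ℂ} {f' α β : ℂ} {x : ℝ}
    (hf : HasDerivAt f f' (α * x + β)) : HasDerivAt (fun x : ℝ => f (α * x + β)) (α * f') x := by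
  have := hf.comp (x : ℂ) (((hasDerivAt_id (x : ℂ)).const_mul α).add_const β)
  simpa [mul_comm] using this.comp_ofReal

namespace SchwartzMap

section Real

variable {E : Type*} [NormedAddCommGroup E] [NormedSpace ℝ E]

theorem lineDerivOp_one_apply (f : 𝓢(ℝ, E)) (x : ℝ) : ∂_{(1 : ℝ)} f x = deriv f x := by
  rw [lineDerivOp_apply_eq_fderiv]; rfl

theorem hasDerivAt_lineDerivOp_one (f : 𝓢(ℝ, E)) (x : ℝ) :
    HasDerivAt f (∂_{(1 : ℝ)} f x) x := by
  rw [lineDerivOp_one_apply]; exact f.hasDerivAt x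

theorem smulLeftCLM_id_smulLeftCLM_pow (f : 𝓢(ℝ, E)) (k : ℕ) :
    smulLeftCLM E (fun x : ℝ => x) (smulLeftCLM E (fun x : ℝ => x ^ k) f) =
      smulLeftCLM E (fun x : ℝ => x ^ (k + 1)) f := by
  rw [smulLeftCLM_smulLeftCLM_apply (by fun_prop) (by fun_prop)]
  congr 2; ext x; simp [pow_succ, mul_comm]

end Real

variable {E : Type*} [NormedAddCommGroup E] [NormedSpace ℂ E]

theorem lineDerivOp_fourier_smulLeftCLM_pow (f : 𝓢(ℝ, E)) (k : ℕ) :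
    ∂_{(1 : ℝ)} (𝓕 (smulLeftCLM E (fun x : ℝ => x ^ k) f)) =
      -(2 * Real.pi * I) • 𝓕 (smulLeftCLM E (fun x : ℝ => x ^ (k + 1)) f) := by
  rw [lineDerivOp_fourier_eq, fourier_smul, ← smulLeftCLM_id_smulLeftCLM_pow]
  congr 3; ext x; simp

theorem fourier_lineDerivOp_one_apply (f : 𝓢(ℝ, E)) (ξ : ℝ) :
    𝓕 (∂_{(1 : ℝ)} f) ξ = (2 * Real.pi * I * ξ) • 𝓕 f ξ := by
  rw [fourier_lineDerivOp_eq, smul_apply, smulLeftCLM_apply_apply (by fun_prop),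
    ← Complex.coe_smul, smul_smul]
  simp

theorem fourier_smulLeftCLM_pow_apply_zero (f : 𝓢(ℝ, E)) (k : ℕ) :
    𝓕 (smulLeftCLM E (fun x : ℝ => x ^ k) f) 0 = ∫ x : ℝ, x ^ k • f x := by
  rw [fourier_coe, Real.fourier_real_eq_integral_exp_smul]
  simp [smulLeftCLM_apply_apply (show (fun x : ℝ => x ^ k).HasTemperateGrowth by fun_prop)]

open Matrix in
theorem eq_zero_of_lineDerivOp_lineDerivOp_eq_of_moments_eq_zero (g : 𝓢(ℝ, ℂ))
    {a₃ a₂ a₁ a₀ : ℂ} (ha₃ : a₃ ≠ 0)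
    (hg : ∂_{(1 : ℝ)} (∂_{(1 : ℝ)} g) = a₃ • smulLeftCLM ℂ (fun x : ℝ => x ^ 3) g +
      a₂ • smulLeftCLM ℂ (fun x : ℝ => x ^ 2) g + a₁ • smulLeftCLM ℂ (fun x : ℝ => x ^ 1) g +
      a₀ • smulLeftCLM ℂ (fun x : ℝ => x ^ 0) g)
    (hmom : ∀ k ≤ 2, ∫ x : ℝ, (x : ℂ) ^ k * g x = 0) : g = 0 := by
  set c : ℂ := -(2 * Real.pi * I)
  set v : ℕ → ℝ → ℂ := fun k ξ => 𝓕 (smulLeftCLM ℂ (fun x : ℝ => x ^ k) g) ξ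
  have hv : ∀ k ξ, HasDerivAt (v k) (c * v (k + 1) ξ) ξ := fun k ξ => by
    simpa [v, c, lineDerivOp_fourier_smulLeftCLM_pow] using
      hasDerivAt_lineDerivOp_one (𝓕 (smulLeftCLM ℂ (fun x : ℝ => x ^ k) g)) ξ
  have hg₀ : smulLeftCLM ℂ (fun x : ℝ => x ^ 0) g = g := by
    ext x; simp
  have hrel : ∀ ξ : ℝ,
      a₃ * v 3 ξ + a₂ * v 2 ξ + a₁ * v 1 ξ + a₀ * v 0 ξ = c ^ 2 * ξ ^ 2 * v 0 ξ := by
    intro ξ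
    have := congrArg (fun h : 𝓢(ℝ, ℂ) => 𝓕 h ξ) hg
    simp only [fourier_lineDerivOp_one_apply, FourierAdd.fourier_add, fourier_smul,
      _root_.add_apply, _root_.smul_apply, smul_eq_mul, hg₀] at this
    simp only [v, hg₀, ← this, c]
    ring
  -- `v 3` is eliminated from `(v 2)′ = c v 3` by `hrel`
  set A : ℝ → Matrix (Fin 3) (Fin 3) ℂ := fun ξ =>
    !![0, c, 0; 0, 0, c; c * (c ^ 2 * ξ ^ 2 - a₀) / a₃, -(c * a₁ / a₃), -(c * a₂ / a₃)]
  have hA : Continuous A := by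
    refine continuous_matrix fun i j => ?_
    fin_cases i <;> fin_cases j <;> simp [A] <;> fun_prop
  have hu : ∀ ξ, HasDerivAt (fun ξ => ![v 0 ξ, v 1 ξ, v 2 ξ])
      (A ξ *ᵥ ![v 0 ξ, v 1 ξ, v 2 ξ]) ξ := by
    intro ξ
    refine hasDerivAt_pi.2 fun i => ?_
    fin_cases i
    · simpa [A, Matrix.mulVec, dotProduct, Fin.sum_univ_three] using hv 0 ξ
    · simpa [A, Matrix.mulVec, dotProduct, Fin.sum_univ_three] using hv 1 ξ
    · refine (hv 2 ξ).congr_deriv ?_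
      simp [A, Matrix.mulVec, dotProduct, Fin.sum_univ_three]
      field_simp
      linear_combination c * hrel ξ
  have h₀ : ![v 0 0, v 1 0, v 2 0] = 0 := by
    ext i
    fin_cases i
    · simpa [v, fourier_smulLeftCLM_pow_apply_zero] using hmom 0 (by norm_num)
    · simpa [v, fourier_smulLeftCLM_pow_apply_zero] using hmom 1 (by norm_num)
    · simpa [v, fourier_smulLeftCLM_pow_apply_zero] using hmom 2 (by norm_num)
  have hv₀ : 𝓕 g = 0 := by
    ext ξ
    simpa [v, hg₀] using congrFun (Matrix.eq_zero_of_hasDerivAt_mulVec hA hu h₀ ξ) 0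
  calc g = 𝓕⁻ (𝓕 g) := (fourierInv_fourier_eq g).symm
    _ = 0 := by rw [hv₀]; simp

theorem lineDerivOp_lineDerivOp_eq_of_eq_mul_ofReal_add (α β ζ : ℂ) {w : ℂ → ℂ}
    (hw : Differentiable ℂ w) (heq : ∀ y : ℂ, deriv (deriv w) y = (y ^ 3 + ζ * y) * w y)
    {g : 𝓢(ℝ, ℂ)} (hg : ∀ x : ℝ, g x = w (α * x + β)) :
    ∂_{(1 : ℝ)} (∂_{(1 : ℝ)} g) = α ^ 5 • smulLeftCLM ℂ (fun x : ℝ => x ^ 3) g +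
      (3 * α ^ 4 * β) • smulLeftCLM ℂ (fun x : ℝ => x ^ 2) g +
      (α ^ 3 * (3 * β ^ 2 + ζ)) • smulLeftCLM ℂ (fun x : ℝ => x ^ 1) g +
      (α ^ 2 * (β ^ 3 + ζ * β)) • smulLeftCLM ℂ (fun x : ℝ => x ^ 0) g := by
  have hg' : ∀ x : ℝ, ∂_{(1 : ℝ)} g x = α * deriv w (α * x + β) := fun x => by
    rw [lineDerivOp_one_apply, funext hg]
    exact (hw _).hasDerivAt.comp_mul_ofReal_add.deriv
  have hg'' : ∀ x : ℝ,
      ∂_{(1 : ℝ)} (∂_{(1 : ℝ)} g) x = α * (α * deriv (deriv w) (α * x + β)) := fun x => by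
    rw [lineDerivOp_one_apply, funext hg']
    exact ((hw.deriv _).hasDerivAt.comp_mul_ofReal_add.const_mul α).deriv
  have hpow (k : ℕ) : (fun x : ℝ => x ^ k).HasTemperateGrowth := by fun_prop
  ext x
  simp only [hg'', add_apply, smul_apply, smulLeftCLM_apply_apply (hpow _), heq, hg]
  simp only [Complex.real_smul, smul_eq_mul]
  push_cast
  ring

end SchwartzMap

theorem Differentiable.eq_zero_of_forall_mul_ofReal_add_eq_zero {E : Type*}
    [NormedAddCommGroup E] [NormedSpace ℂ E] [CompleteSpace E] {f : ℂ → E}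
    (hf : Differentiable ℂ f) {α : ℂ} (hα : α ≠ 0) (β : ℂ) (h : ∀ x : ℝ, f (α * x + β) = 0) :
    f = 0 := by
  have hlim : Tendsto (fun x : ℝ => α * x + β) (𝓝[≠] 0) (𝓝[≠] β) := by
    refine tendsto_nhdsWithin_of_tendsto_nhds_of_eventually_within _ ?_ ?_
    · exact ((by fun_prop : Continuous fun x : ℝ => α * x + β).tendsto' 0 β (by simp)).mono_left
        nhdsWithin_le_nhds
    · filter_upwards [self_mem_nhdsWithin] with x hx
      simpa [hα] using hx
  have hfa : AnalyticOnNhd ℂ f univ := hf.differentiableOn.analyticOnNhd isOpen_univ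
  funext z
  exact hfa.eqOn_zero_of_preconnected_of_frequently_eq_zero isPreconnected_univ (mem_univ β)
    (hlim.frequently (.of_forall h)) (mem_univ z)

/-- The moment nondegeneracy claim from the end of Section 3: if an entire solution `w` of
`w″ = (y³ + ζy)w` restricts to a Schwartz function `x ↦ w(αx + β)` on the real line
(`α ≠ 0`) whose moments of order `0, 1, 2` all vanish, then `w ≡ 0`. -/
theorem moment_nondegeneracy (α β ζ : ℂ) (hα : α ≠ 0)
    (w : ℂ → ℂ) (hw : Differentiable ℂ w)
    (heq : ∀ y : ℂ, deriv (deriv w) y = (y ^ 3 + ζ * y) * w y)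
    (hschwartz : ∃ g : SchwartzMap ℝ ℂ, ∀ x : ℝ, g x = w (α * (x : ℂ) + β))
    (hmom : ∀ k : ℕ, k ≤ 2 → (∫ x : ℝ, (x : ℂ) ^ k * w (α * (x : ℂ) + β)) = 0) :
    ∀ y : ℂ, w y = 0 := by
  obtain ⟨g, hg⟩ := hschwartz
  have hg₀ : g = 0 := g.eq_zero_of_lineDerivOp_lineDerivOp_eq_of_moments_eq_zero
    (pow_ne_zero 5 hα) (lineDerivOp_lineDerivOp_eq_of_eq_mul_ofReal_add α β ζ hw heq hg)
    (fun k hk => by simpa only [hg] using hmom k hk)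
  have hline : ∀ x : ℝ, w (α * x + β) = 0 := fun x => by simp [← hg, hg₀]
  exact congrFun (hw.eq_zero_of_forall_mul_ofReal_add_eq_zero hα β hline)
end

section
/- Let b₀ ∈ ℝ with 0 < |b₀| < 2/(3√3), and define q : ℝ³ → ℝ by q(y₁, η₀, η₁) = η₀³ − (η₁² + y₁²)η₀ − b₀y₁³. Let Γ be the connected component of the point (0, 1, 0) in the open set {v ∈ ℝ³ : q(v) ≠ 0}. Then every point (y₁, η₀, η₁) ∈ Γ satisfies η₀ > 0. -/
/-!
Viewed as a cubic in `η₀`, `q = η₀³ − a η₀ − b₀ y₁³` with `a = η₁² + y₁²` has its local minimum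
at `η₀ = k := √(a / 3)`, where it equals `−2k³ − b₀ y₁³ ≤ 0` because `27 b₀² < 4`. Hence the
surface `η₀ = k` never meets `{q > 0}`, so `{q > 0, η₀ > k}` is relatively clopen in `{q ≠ 0}`.
It contains `(0, 1, 0)`, hence the whole component, and there `η₀ > k ≥ 0`.
-/

theorem connectedComponentIn_subset_of_pos_imp_ne_zero {X : Type*} [TopologicalSpace X]
    {f g : X → ℝ} (hf : Continuous f) (hg : Continuous g) (hfg : ∀ x, 0 < f x → g x ≠ 0)
    {x : X} (hfx : 0 < f x) (hgx : 0 < g x) :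
    connectedComponentIn {x | f x ≠ 0} x ⊆ {x | 0 < f x ∧ 0 < g x} := by
  have hdisj : Disjoint {x | 0 < f x ∧ 0 < g x} ({x | f x < 0} ∪ {x | g x < 0}) := by
    rw [Set.disjoint_left]
    rintro y ⟨hfy, hgy⟩ (hy | hy)
    exacts [lt_asymm hfy hy, lt_asymm hgy hy]
  have hcover : connectedComponentIn {x | f x ≠ 0} x ⊆
      {x | 0 < f x ∧ 0 < g x} ∪ ({x | f x < 0} ∪ {x | g x < 0}) := by
    refine (connectedComponentIn_subset _ _).trans fun y hy => ?_
    rcases (ne_iff_lt_or_gt.mp hy : f y < 0 ∨ 0 < f y) with hfy | hfy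
    · exact Or.inr (Or.inl hfy)
    · rcases (hfg y hfy).lt_or_gt with hgy | hgy
      · exact Or.inr (Or.inr hgy)
      · exact Or.inl ⟨hfy, hgy⟩
  exact isPreconnected_connectedComponentIn.subset_left_of_subset_union
    ((isOpen_lt continuous_const hf).inter (isOpen_lt continuous_const hg))
    ((isOpen_lt hf continuous_const).union (isOpen_lt hg continuous_const)) hdisj hcover
    ⟨x, mem_connectedComponentIn hfx.ne', hfx, hgx⟩

theorem sq_lt_of_abs_lt_two_div_three_mul_sqrt_three {b : ℝ} (hb : |b| < 2 / (3 * √3)) :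
    27 * b ^ 2 < 4 := by
  have h27 : (3 * √3) ^ 2 = 27 := by
    rw [mul_pow, Real.sq_sqrt (by norm_num : (0 : ℝ) ≤ 3)]; norm_num
  have hsq : |b| ^ 2 < (2 / (3 * √3)) ^ 2 := pow_lt_pow_left₀ hb (abs_nonneg b) two_ne_zero
  rw [sq_abs, div_pow, h27] at hsq
  linarith

theorem neg_mul_cube_le_two_mul_cube {b y k : ℝ} (hb : 27 * b ^ 2 ≤ 4) (hk : 0 ≤ k)
    (hy : y ^ 2 ≤ 3 * k ^ 2) : -(b * y ^ 3) ≤ 2 * k ^ 3 := by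
  refine (abs_le_of_sq_le_sq' ?_ (by positivity)).1 |> neg_le.mp
  have hy3 : (y ^ 2) ^ 3 ≤ (3 * k ^ 2) ^ 3 := pow_le_pow_left₀ (sq_nonneg y) hy 3
  calc (b * y ^ 3) ^ 2 = b ^ 2 * (y ^ 2) ^ 3 := by ring
    _ ≤ 4 / 27 * (3 * k ^ 2) ^ 3 := by gcongr; linarith
    _ = (2 * k ^ 3) ^ 2 := by ring

def cubicLocalization (b₀ : ℝ) (v : ℝ × ℝ × ℝ) : ℝ :=
  v.2.1 ^ 3 - (v.2.2 ^ 2 + v.1 ^ 2) * v.2.1 - b₀ * v.1 ^ 3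

theorem cubicLocalization_nonpos_at_critical_point {b₀ : ℝ} (hb₀ : 27 * b₀ ^ 2 ≤ 4)
    (y η₁ : ℝ) : cubicLocalization b₀ (y, √((η₁ ^ 2 + y ^ 2) / 3), η₁) ≤ 0 := by
  set k := √((η₁ ^ 2 + y ^ 2) / 3)
  have hk : k ^ 2 = (η₁ ^ 2 + y ^ 2) / 3 := Real.sq_sqrt (by positivity)
  have hy : y ^ 2 ≤ 3 * k ^ 2 := by nlinarith [sq_nonneg η₁]
  have hq : cubicLocalization b₀ (y, k, η₁) = -2 * k ^ 3 - b₀ * y ^ 3 := by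
    simp only [cubicLocalization]
    linear_combination (3 * k) * hk
  linarith [neg_mul_cube_le_two_mul_cube hb₀ (Real.sqrt_nonneg _) hy]

theorem hyperbolicity_cone_positive_general (b₀ : ℝ)
    (hb₀' : |b₀| < 2 / (3 * Real.sqrt 3)) :
    ∀ v ∈ connectedComponentIn
        {v : ℝ × ℝ × ℝ | v.2.1 ^ 3 - (v.2.2 ^ 2 + v.1 ^ 2) * v.2.1 - b₀ * v.1 ^ 3 ≠ 0}
        ((0, 1, 0) : ℝ × ℝ × ℝ),
      0 < v.2.1 := by
  intro v hv
  have hb₀ := (sq_lt_of_abs_lt_two_div_three_mul_sqrt_three hb₀').le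
  have hcrit (w : ℝ × ℝ × ℝ) (hw : 0 < cubicLocalization b₀ w) :
      w.2.1 - √((w.2.2 ^ 2 + w.1 ^ 2) / 3) ≠ 0 := by
    obtain ⟨y, η₀, η₁⟩ := w
    intro hη₀
    obtain rfl : η₀ = √((η₁ ^ 2 + y ^ 2) / 3) := sub_eq_zero.mp hη₀
    exact hw.not_ge (cubicLocalization_nonpos_at_critical_point hb₀ y η₁)
  have hcomp := connectedComponentIn_subset_of_pos_imp_ne_zero
    (f := cubicLocalization b₀) (by unfold cubicLocalization; fun_prop) (by fun_prop) hcrit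
    (by norm_num [cubicLocalization]) (by norm_num) hv
  linarith [hcomp.2, Real.sqrt_nonneg ((v.2.2 ^ 2 + v.1 ^ 2) / 3)]

/-- The hyperbolicity cone of the localization `q(y₁, η₀, η₁) = η₀³ − (η₁² + y₁²)η₀ − b₀y₁³`
at a triple point: every point of the connected component of `(0, 1, 0)` in `{q ≠ 0}` has
`η₀ > 0`. -/
theorem hyperbolicity_cone_positive (b₀ : ℝ) (hb₀ : 0 < |b₀|)
    (hb₀' : |b₀| < 2 / (3 * Real.sqrt 3)) :
    ∀ v ∈ connectedComponentIn
        {v : ℝ × ℝ × ℝ | v.2.1 ^ 3 - (v.2.2 ^ 2 + v.1 ^ 2) * v.2.1 - b₀ * v.1 ^ 3 ≠ 0}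
        ((0, 1, 0) : ℝ × ℝ × ℝ),
      0 < v.2.1 :=
  hyperbolicity_cone_positive_general b₀ hb₀'
end

section
/- Let b ∈ ℝ with 0 < |b| < 1. There exist no open neighborhood V of (0,0) in ℝ² and no C^∞ functions L, A, B : V → ℝ such that for all (x, ξ) ∈ V and all τ ∈ ℝ, τ³ − 3(x² + ξ²)τ − 2bx³ = (τ − L(x, ξ)) · (τ² + A(x, ξ)τ + B(x, ξ)). -/
/-!
A smooth root `L` of the symbol vanishes at the origin, and since the symbol is homogeneous of
degree three in `(τ, x, ξ)`, the blow-ups `r⁻¹ L(r x, r ξ)` are again roots; letting `r → 0` shows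
that the linear form `dL(0)` is a root as well. But `τ = a x + c ξ` solves
`τ³ − 3(x² + ξ²)τ − 2bx³ = 0` identically only when `b = 0`: comparing coefficients gives
`c(c² − 3) = 0`, `a(c² − 1) = 0` and `a³ − 3a = 2b`.
-/

open Filter Topology

def cubicSymbol (b τ : ℝ) (p : ℝ × ℝ) : ℝ :=
  τ ^ 3 - 3 * (p.1 ^ 2 + p.2 ^ 2) * τ - 2 * b * p.1 ^ 3

lemma cubicSymbol_mul_smul (b r τ : ℝ) (p : ℝ × ℝ) :
    cubicSymbol b (r * τ) (r • p) = r ^ 3 * cubicSymbol b τ p := by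
  simp only [cubicSymbol, Prod.smul_fst, Prod.smul_snd, smul_eq_mul]
  ring

lemma continuous_cubicSymbol (b : ℝ) (p : ℝ × ℝ) : Continuous fun τ => cubicSymbol b τ p := by
  unfold cubicSymbol
  fun_prop

lemma tendsto_inv_mul_comp_smul_nhdsNE {E : Type*} [NormedAddCommGroup E] [NormedSpace ℝ E]
    {L : E → ℝ} {φ : E →L[ℝ] ℝ} (hL : HasFDerivAt L φ 0) (hL0 : L 0 = 0) (d : E) :
    Tendsto (fun r : ℝ => r⁻¹ * L (r • d)) (𝓝[≠] 0) (𝓝 (φ d)) := by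
  have hL' : HasFDerivAt L φ ((0 : ℝ) • d) := by rwa [zero_smul]
  have hline : HasDerivAt (fun r : ℝ => L (r • d)) (φ d) 0 :=
    hL'.comp_hasDerivAt (0 : ℝ) (by simpa using (hasDerivAt_id (0 : ℝ)).smul_const d)
  have hslope : slope (fun r : ℝ => L (r • d)) 0 = fun r => r⁻¹ * L (r • d) := by
    ext r
    simp [slope_def_field, hL0, div_eq_inv_mul]
  simpa only [hslope] using hasDerivAt_iff_tendsto_slope.mp hline

lemma HasFDerivAt.apply_root_of_homogeneous {E : Type*} [NormedAddCommGroup E]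
    [NormedSpace ℝ E] {G : ℝ → E → ℝ} {k : ℕ}
    (hG : ∀ r t v, G (r * t) (r • v) = r ^ k * G t v) (hGc : ∀ v, Continuous fun t => G t v)
    {L : E → ℝ} {φ : E →L[ℝ] ℝ} (hL : HasFDerivAt L φ 0) (hL0 : L 0 = 0)
    (hroot : ∀ᶠ p in 𝓝 0, G (L p) p = 0) (d : E) : G (φ d) d = 0 := by
  have hline : ∀ᶠ r in 𝓝 (0 : ℝ), G (L (r • d)) (r • d) = 0 := by
    have hcont : Continuous fun r : ℝ => r • d := by fun_prop
    exact (hcont.tendsto' 0 0 (zero_smul ℝ d)).eventually hroot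
  have hblowup : ∀ᶠ r in 𝓝[≠] (0 : ℝ), G (r⁻¹ * L (r • d)) d = 0 := by
    filter_upwards [nhdsWithin_le_nhds hline, self_mem_nhdsWithin] with r hr hr0
    have h := hG r (r⁻¹ * L (r • d)) d
    rw [mul_inv_cancel_left₀ hr0, hr] at h
    exact (mul_eq_zero.mp h.symm).resolve_left (pow_ne_zero k hr0)
  exact tendsto_nhds_unique_of_eventuallyEq
    ((hGc d).tendsto (φ d) |>.comp (tendsto_inv_mul_comp_smul_nhdsNE hL hL0 d))
    tendsto_const_nhds hblowup

lemma eq_zero_of_forall_cubicSymbol_linear_eq_zero {b : ℝ} (φ : ℝ × ℝ →L[ℝ] ℝ)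
    (h : ∀ d, cubicSymbol b (φ d) d = 0) : b = 0 := by
  set a := φ (1, 0)
  set c := φ (0, 1)
  have hplus : φ (1, 1) = a + c := by rw [← map_add]; norm_num
  have hminus : φ (1, -1) = a - c := by rw [← map_sub]; norm_num
  have e₁ : a ^ 3 - 3 * a - 2 * b = 0 := by simpa [cubicSymbol] using h (1, 0)
  have e₂ : c ^ 3 - 3 * c = 0 := by simpa [cubicSymbol] using h (0, 1)
  have e₃ := h (1, 1)
  have e₄ := h (1, -1)
  simp only [cubicSymbol, hplus, hminus] at e₃ e₄
  have hc : c * (c ^ 2 - 3) = 0 := by linear_combination e₂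
  have hac : a * (c ^ 2 - 1) = 0 := by linear_combination (e₃ + e₄) / 6 - e₁ / 3
  have ha : a = 0 := by
    refine (mul_eq_zero.mp hac).resolve_right fun hc1 => ?_
    have hc0 : c = 0 := by linear_combination -(hc - c * hc1) / 2
    norm_num [hc0] at hc1
  linear_combination -e₁ / 2 + (a ^ 2 - 3) * ha / 2

theorem no_smooth_factorization_general (b : ℝ) (hb₀ : 0 < |b|) :
    ¬ ∃ V : Set (ℝ × ℝ), IsOpen V ∧ ((0, 0) : ℝ × ℝ) ∈ V ∧
        ∃ L A B : ℝ × ℝ → ℝ,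
          ContDiffOn ℝ (⊤ : ℕ∞) L V ∧ ContDiffOn ℝ (⊤ : ℕ∞) A V ∧
          ContDiffOn ℝ (⊤ : ℕ∞) B V ∧
          ∀ p ∈ V, ∀ τ : ℝ,
            τ ^ 3 - 3 * (p.1 ^ 2 + p.2 ^ 2) * τ - 2 * b * p.1 ^ 3
              = (τ - L p) * (τ ^ 2 + A p * τ + B p) := by
  rintro ⟨V, hVo, hV0, L, A, B, hL, -, -, hfac⟩
  have hroot : ∀ p ∈ V, cubicSymbol b (L p) p = 0 := fun p hp => by
    simpa [cubicSymbol] using hfac p hp (L p)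
  have hL0 : L 0 = 0 := by simpa [cubicSymbol] using hroot 0 hV0
  have hLdiff : DifferentiableAt ℝ L 0 :=
    (hL.contDiffAt (hVo.mem_nhds hV0)).differentiableAt (by simp)
  have hlin := hLdiff.hasFDerivAt.apply_root_of_homogeneous (cubicSymbol_mul_smul b)
    (continuous_cubicSymbol b) hL0 (eventually_of_mem (hVo.mem_nhds hV0) hroot)
  exact abs_pos.mp hb₀ (eq_zero_of_forall_cubicSymbol_linear_eq_zero _ hlin)

/-- Non-factorizability of the principal symbol with a smooth root: for `0 < |b| < 1`
there is no neighborhood `V` of the origin and no smooth functions `L, A, B` on `V` with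
`τ³ − 3(x² + ξ²)τ − 2bx³ = (τ − L(x,ξ))(τ² + A(x,ξ)τ + B(x,ξ))` on `V`. -/
theorem no_smooth_factorization (b : ℝ) (hb₀ : 0 < |b|) (hb₁ : |b| < 1) :
    ¬ ∃ V : Set (ℝ × ℝ), IsOpen V ∧ ((0, 0) : ℝ × ℝ) ∈ V ∧
        ∃ L A B : ℝ × ℝ → ℝ,
          ContDiffOn ℝ (⊤ : ℕ∞) L V ∧ ContDiffOn ℝ (⊤ : ℕ∞) A V ∧
          ContDiffOn ℝ (⊤ : ℕ∞) B V ∧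
          ∀ p ∈ V, ∀ τ : ℝ,
            τ ^ 3 - 3 * (p.1 ^ 2 + p.2 ^ 2) * τ - 2 * b * p.1 ^ 3
              = (τ - L p) * (τ ^ 2 + A p * τ + B p) :=
  no_smooth_factorization_general b hb₀
end
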